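/- arXiv:1707.01795 — 4 statements merged into one kernel-verified Lean document; each statement's English description precedes it below -/
import Mathlib

section
/- Let T, d be positive integers with T > 2d. Let S be a real polynomial in the variables W_1, …, W_T of total degree at most d, and let Q = (W_1 + ⋯ + W_T)·S (a polynomial of degree at most d+1). Then the number of indices j ∈ {1, …, T} such that ‖Q_{j,1}‖ ≥ (20dT)^{-3^d}·‖S‖ is at least T/2. -/
open MvPolynomial Finset

/-- Squared ℓ2 norm of the coefficient vector of a multivariate polynomial
in the standard monomial basis. -/
noncomputable def coeffNormSq {σ : Type*} (P : MvPolynomial σ ℝ) : ℝ :=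
  ∑ m ∈ P.support, (P.coeff m) ^ 2

/-- ℓ2 norm of the coefficient vector of a multivariate polynomial. -/
noncomputable def coeffNorm {σ : Type*} (P : MvPolynomial σ ℝ) : ℝ :=
  Real.sqrt (coeffNormSq P)

/-- The `W_j`-linear part of a polynomial: collect all monomials in which the
variable `j` appears with exponent exactly `1` and delete the factor `W_j`. -/
noncomputable def linearPart {T : ℕ} (Q : MvPolynomial (Fin T) ℝ) (j : Fin T) :
    MvPolynomial (Fin T) ℝ :=
  ∑ m ∈ Q.support.filter (fun m => m j = 1),
    monomial (m - Finsupp.single j 1) (Q.coeff m)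

/-!
Write `L_A = ∑_{i ∈ A} X_i` and `Z_j` for the substitution `X_j = 0`, so that the `W_j`-linear
part is `Z_j ∘ ∂_j`. Two norm estimates drive the argument. For the Fischer inner product
`⟨f, g⟩ = ∑ m! f_m g_m`, multiplication by `X_i` is adjoint to `∂_i`, which gives
`⟨L_A f, L_A f⟩ ≥ |A| ⟨f, f⟩`; comparing with the ℓ² norm, dividing a polynomial of degree `≤ D`
by `L_A ^ s` costs at most a factor `√D!`. And a polynomial `G` of degree `e` is controlled by
its restrictions `Z_j G` to any `e + 1` hyperplanes `X_j = 0`.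

Suppose the linear parts of `L_A ^ (s+1) * G` are small at the indices of some `B ⊂ A` with
`|B| > deg G`. By the product rule
`(L_A ^ (s+1) * G)_{j,1} = L_{A∖j} ^ s * ((s+1) Z_j G + L_{A∖j} G_{j,1})`, so the bracket is small.
Then `L_{A∖j} ^ (s+2) * G_{j,1}` has small linear parts at the indices of `B ∖ j`, and induction on
the degree bounds `G_{j,1}`, hence `Z_j G`, hence `G`. For `S` with `A` all of `Fin T` and `s = 0`
this says that at most `d` of the linear parts of `Q` are small.
-/

section

variable {σ : Type*}

lemma coeffNormSq_eq_sum_of_support_subset {P : MvPolynomial σ ℝ} {s : Finset (σ →₀ ℕ)}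
    (h : P.support ⊆ s) : coeffNormSq P = ∑ m ∈ s, P.coeff m ^ 2 :=
  Finset.sum_subset h fun m _ hm => by simp [notMem_support_iff.mp hm]

lemma coeffNormSq_nonneg (P : MvPolynomial σ ℝ) : 0 ≤ coeffNormSq P :=
  Finset.sum_nonneg fun _ _ => sq_nonneg _

lemma coeffNorm_nonneg (P : MvPolynomial σ ℝ) : 0 ≤ coeffNorm P := Real.sqrt_nonneg _

lemma sq_coeffNorm (P : MvPolynomial σ ℝ) : coeffNorm P ^ 2 = coeffNormSq P :=
  Real.sq_sqrt (coeffNormSq_nonneg P)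

lemma coeffNorm_le_of_injOn {P Q : MvPolynomial σ ℝ} (φ : (σ →₀ ℕ) → σ →₀ ℕ)
    (hφ : Set.InjOn φ P.support) (h : ∀ m ∈ P.support, P.coeff m = Q.coeff (φ m)) :
    coeffNorm P ≤ coeffNorm Q := by
  classical
  have himage : P.support.image φ ⊆ Q.support := by
    simp only [Finset.image_subset_iff, mem_support_iff]
    exact fun m hm => h m (mem_support_iff.mpr hm) ▸ hm
  refine Real.sqrt_le_sqrt ?_
  calc coeffNormSq P = ∑ m ∈ P.support.image φ, Q.coeff m ^ 2 := by
        rw [Finset.sum_image hφ]; exact Finset.sum_congr rfl fun m hm => by rw [h m hm]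
    _ ≤ coeffNormSq Q :=
        Finset.sum_le_sum_of_subset_of_nonneg himage fun _ _ _ => sq_nonneg _

lemma coeffNorm_smul (c : ℝ) (P : MvPolynomial σ ℝ) :
    coeffNorm (c • P) = |c| * coeffNorm P := by
  have hsub : (c • P).support ⊆ P.support := support_smul
  rw [coeffNorm, coeffNorm, coeffNormSq_eq_sum_of_support_subset hsub, ← Real.sqrt_sq_eq_abs,
    ← Real.sqrt_mul (sq_nonneg c), coeffNormSq, Finset.mul_sum]
  simp only [coeff_smul, smul_eq_mul, mul_pow]

lemma coeffNorm_nsmul (n : ℕ) (P : MvPolynomial σ ℝ) :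
    coeffNorm (n • P) = n * coeffNorm P := by
  rw [← Nat.cast_smul_eq_nsmul ℝ, coeffNorm_smul, Nat.abs_cast]

lemma coeffNorm_neg (P : MvPolynomial σ ℝ) : coeffNorm (-P) = coeffNorm P := by
  simpa using coeffNorm_smul (-1) P

lemma coeffNorm_add_le (P Q : MvPolynomial σ ℝ) :
    coeffNorm (P + Q) ≤ coeffNorm P + coeffNorm Q := by
  classical
  set s := P.support ∪ Q.support
  have key := norm_add_le (WithLp.toLp 2 fun m : s => P.coeff m : EuclideanSpace ℝ s)
    (WithLp.toLp 2 fun m : s => Q.coeff m)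
  simp only [EuclideanSpace.norm_eq, ← WithLp.toLp_add, Pi.add_apply, Real.norm_eq_abs,
    sq_abs] at key
  rw [coeffNorm, coeffNorm, coeffNorm, coeffNormSq_eq_sum_of_support_subset support_add,
    coeffNormSq_eq_sum_of_support_subset (Finset.subset_union_left (s₂ := Q.support)),
    coeffNormSq_eq_sum_of_support_subset (Finset.subset_union_right (s₁ := P.support))]
  simpa only [coeff_add, Finset.sum_coe_sort s (fun m => (P.coeff m + Q.coeff m) ^ 2),
    Finset.sum_coe_sort s (fun m => P.coeff m ^ 2),
    Finset.sum_coe_sort s (fun m => Q.coeff m ^ 2)] using key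

lemma coeffNorm_sub_le (P Q : MvPolynomial σ ℝ) :
    coeffNorm (P - Q) ≤ coeffNorm P + coeffNorm Q := by
  simpa [sub_eq_add_neg, coeffNorm_neg] using coeffNorm_add_le P (-Q)

lemma coeffNorm_sum_le {ι : Type*} (s : Finset ι) (F : ι → MvPolynomial σ ℝ) :
    coeffNorm (∑ i ∈ s, F i) ≤ ∑ i ∈ s, coeffNorm (F i) :=
  Finset.le_sum_of_subadditive coeffNorm (by simp [coeffNorm, coeffNormSq]) coeffNorm_add_le s F

lemma coeffNorm_X_mul (i : σ) (P : MvPolynomial σ ℝ) : coeffNorm (X i * P) = coeffNorm P := by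
  rw [coeffNorm, coeffNorm, coeffNormSq, mul_comm, support_mul_X, Finset.sum_map]
  simp only [addRightEmbedding_apply, coeff_mul_X, coeffNormSq]

noncomputable def sumX (A : Finset σ) : MvPolynomial σ ℝ := ∑ i ∈ A, X i

lemma coeffNorm_sumX_mul_le (A : Finset σ) (P : MvPolynomial σ ℝ) :
    coeffNorm (sumX A * P) ≤ A.card * coeffNorm P := by
  rw [sumX, Finset.sum_mul]
  refine (coeffNorm_sum_le _ _).trans ?_
  simp [coeffNorm_X_mul]

lemma coeffNorm_sumX_pow_mul_le (A : Finset σ) (k : ℕ) (P : MvPolynomial σ ℝ) :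
    coeffNorm (sumX A ^ k * P) ≤ A.card ^ k * coeffNorm P := by
  induction k with
  | zero => simp
  | succ k ih =>
    rw [pow_succ', mul_assoc, pow_succ', mul_assoc]
    exact (coeffNorm_sumX_mul_le A _).trans (by gcongr)

lemma totalDegree_sumX_pow_mul_le (A : Finset σ) (k : ℕ) (G : MvPolynomial σ ℝ) :
    (sumX A ^ k * G).totalDegree ≤ k + G.totalDegree := by
  have hX : (sumX A).totalDegree ≤ 1 := totalDegree_finsetSum_le fun i _ => (totalDegree_X i).le
  refine (totalDegree_mul _ _).trans (Nat.add_le_add_right ((totalDegree_pow _ _).trans ?_) _)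
  simpa using Nat.mul_le_mul_left k hX

lemma pderiv_sumX {A : Finset σ} {i : σ} (hi : i ∈ A) : pderiv i (sumX A) = 1 := by
  classical
  simp [sumX, pderiv_X, Pi.single_apply, hi]

section

variable [DecidableEq σ]

noncomputable def killVar (j : σ) : MvPolynomial σ ℝ →ₐ[ℝ] MvPolynomial σ ℝ :=
  aeval (Function.update X j 0)

lemma killVar_monomial (j : σ) (m : σ →₀ ℕ) (c : ℝ) :
    killVar j (monomial m c) = if m j = 0 then monomial m c else 0 := by
  rw [killVar, aeval_monomial, algebraMap_eq]
  split_ifs with h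
  · rw [monomial_eq]
    congr 1
    refine Finsupp.prod_congr fun i hi => ?_
    rw [Function.update_of_ne (by rintro rfl; exact Finsupp.mem_support_iff.mp hi h)]
  · rw [Finsupp.prod, Finset.prod_eq_zero (Finsupp.mem_support_iff.mpr h) (by simp [h]), mul_zero]

lemma coeff_killVar (j : σ) (P : MvPolynomial σ ℝ) (n : σ →₀ ℕ) :
    (killVar j P).coeff n = if n j = 0 then P.coeff n else 0 := by
  induction P using MvPolynomial.induction_on' with
  | monomial m c =>
    rw [killVar_monomial]
    obtain rfl | hmn := eq_or_ne m n
    · split_ifs <;> simp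
    · split_ifs <;> simp [coeff_monomial, hmn]
  | add P Q hP hQ => simp only [map_add, coeff_add, hP, hQ]; split_ifs <;> simp

lemma killVar_C (j : σ) (c : ℝ) : killVar j (C c) = C c := aeval_C _ _

lemma killVar_X_self (j : σ) : killVar j (X j) = 0 := by simp [killVar]

lemma killVar_X_of_ne {i j : σ} (h : i ≠ j) : killVar j (X i) = X i := by
  simp [killVar, Function.update_of_ne h]

lemma killVar_sumX {A : Finset σ} {j : σ} (hj : j ∈ A) :
    killVar j (sumX A) = sumX (A.erase j) := by
  rw [sumX, sumX, ← Finset.add_sum_erase A _ hj, map_add, killVar_X_self, zero_add, map_sum]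
  exact Finset.sum_congr rfl fun i hi => killVar_X_of_ne (Finset.ne_of_mem_erase hi)

lemma killVar_comm (j k : σ) (P : MvPolynomial σ ℝ) :
    killVar j (killVar k P) = killVar k (killVar j P) := by
  ext n; simp only [coeff_killVar]; split_ifs <;> rfl

lemma pderiv_killVar_of_ne {j k : σ} (h : k ≠ j) (P : MvPolynomial σ ℝ) :
    pderiv k (killVar j P) = killVar j (pderiv k P) := by
  ext n
  simp only [coeff_pderiv, coeff_killVar, Finsupp.add_apply, Finsupp.single_apply, if_neg h,
    add_zero]
  split_ifs <;> simp

lemma coeffNorm_killVar_le (j : σ) (P : MvPolynomial σ ℝ) :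
    coeffNorm (killVar j P) ≤ coeffNorm P :=
  coeffNorm_le_of_injOn id (Set.injOn_id _) fun m hm => by
    rw [coeff_killVar, if_pos, id]
    by_contra h
    simp [mem_support_iff, coeff_killVar, h] at hm

lemma coeffNormSq_le_sum_coeffNormSq_killVar {B : Finset σ}
    {G : MvPolynomial σ ℝ} (hB : G.totalDegree < B.card) :
    coeffNormSq G ≤ ∑ j ∈ B, coeffNormSq (killVar j G) := by
  have hvanish : ∀ m ∈ G.support, ∃ j ∈ B, m j = 0 := by
    intro m hm
    by_contra! h
    have : B.card ≤ m.sum fun _ e => e := calc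
      B.card = ∑ _j ∈ B, 1 := (Finset.card_eq_sum_ones B)
      _ ≤ ∑ j ∈ B, m j := Finset.sum_le_sum fun j hj => Nat.one_le_iff_ne_zero.mpr (h j hj)
      _ ≤ ∑ j ∈ m.support, m j :=
        Finset.sum_le_sum_of_subset fun j hj => Finsupp.mem_support_iff.mpr (h j hj)
    exact (this.trans (le_totalDegree hm)).not_gt hB
  have hsupp : ∀ j, (killVar j G).support ⊆ G.support := fun j m => by
    simp only [mem_support_iff, coeff_killVar]; split_ifs <;> simp
  calc coeffNormSq G
      ≤ ∑ m ∈ G.support, ∑ j ∈ B, (if m j = 0 then G.coeff m else 0) ^ 2 := by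
        refine Finset.sum_le_sum fun m hm => ?_
        obtain ⟨j, hj, hmj⟩ := hvanish m hm
        refine le_of_eq_of_le ?_ (Finset.single_le_sum (fun _ _ => sq_nonneg _) hj)
        rw [if_pos hmj]
    _ = ∑ j ∈ B, coeffNormSq (killVar j G) := by
        rw [Finset.sum_comm]
        refine Finset.sum_congr rfl fun j _ => ?_
        simp only [coeffNormSq_eq_sum_of_support_subset (hsupp j), coeff_killVar]

lemma coeffNorm_le_card_mul_of_forall_killVar_le {B : Finset σ}
    {G : MvPolynomial σ ℝ} {M : ℝ} (hB : G.totalDegree < B.card)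
    (h : ∀ j ∈ B, coeffNorm (killVar j G) ≤ M) : coeffNorm G ≤ B.card * M := by
  obtain ⟨j, hj⟩ := Finset.card_pos.mp (Nat.zero_lt_of_lt hB)
  have hM : 0 ≤ M := (coeffNorm_nonneg _).trans (h j hj)
  refine le_of_pow_le_pow_left₀ two_ne_zero (by positivity) ?_
  calc coeffNorm G ^ 2 ≤ ∑ j ∈ B, coeffNorm (killVar j G) ^ 2 := by
        simp only [sq_coeffNorm]
        exact coeffNormSq_le_sum_coeffNormSq_killVar hB
    _ ≤ ∑ _j ∈ B, M ^ 2 :=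
        Finset.sum_le_sum fun j hj => pow_le_pow_left₀ (coeffNorm_nonneg _) (h j hj) 2
    _ ≤ (B.card * M) ^ 2 := by
        rw [Finset.sum_const, nsmul_eq_mul, mul_pow]
        gcongr
        exact_mod_cast Nat.le_self_pow two_ne_zero _

end

def factorialWeight (m : σ →₀ ℕ) : ℕ := m.prod fun _ k => k.factorial

lemma factorialWeight_pos (m : σ →₀ ℕ) : 0 < factorialWeight m :=
  Finset.prod_pos fun _ _ => Nat.factorial_pos _

lemma factorialWeight_add_single (m : σ →₀ ℕ) (i : σ) :
    factorialWeight (m + Finsupp.single i 1) = (m i + 1) * factorialWeight m := by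
  have h0 : ∀ i : σ, (0 : ℕ).factorial = 1 := fun _ => rfl
  rw [factorialWeight, factorialWeight, ← Finsupp.mul_prod_erase' _ i _ h0,
    ← Finsupp.mul_prod_erase' m i _ h0, Finsupp.erase_add, Finsupp.erase_single, add_zero,
    Finsupp.add_apply, Finsupp.single_eq_same, Nat.factorial_succ, mul_assoc]

lemma factorialWeight_le_factorial {m : σ →₀ ℕ} {D : ℕ} (h : (m.sum fun _ e => e) ≤ D) :
    factorialWeight m ≤ D.factorial :=
  (Nat.le_of_dvd (Nat.factorial_pos _) (Nat.prod_factorial_dvd_factorial_sum m.support m)).trans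
    (Nat.factorial_le h)

noncomputable def fischerInner (f g : MvPolynomial σ ℝ) : ℝ :=
  ∑ m ∈ f.support, (factorialWeight m : ℝ) * f.coeff m * g.coeff m

lemma fischerInner_eq_sum_of_support_subset {f : MvPolynomial σ ℝ} {s : Finset (σ →₀ ℕ)}
    (h : f.support ⊆ s) (g : MvPolynomial σ ℝ) :
    fischerInner f g = ∑ m ∈ s, (factorialWeight m : ℝ) * f.coeff m * g.coeff m :=
  Finset.sum_subset h fun m _ hm => by simp [notMem_support_iff.mp hm]

lemma fischerInner_comm (f g : MvPolynomial σ ℝ) : fischerInner f g = fischerInner g f := by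
  classical
  rw [fischerInner_eq_sum_of_support_subset (Finset.subset_union_left (s₂ := g.support)),
    fischerInner_eq_sum_of_support_subset (Finset.subset_union_right (s₁ := f.support))]
  exact Finset.sum_congr rfl fun _ _ => by ring

lemma fischerInner_add_right (f g h : MvPolynomial σ ℝ) :
    fischerInner f (g + h) = fischerInner f g + fischerInner f h := by
  simp only [fischerInner, coeff_add, mul_add, Finset.sum_add_distrib]

lemma fischerInner_sum_right {ι : Type*} (f : MvPolynomial σ ℝ) (s : Finset ι)
    (F : ι → MvPolynomial σ ℝ) :
    fischerInner f (∑ i ∈ s, F i) = ∑ i ∈ s, fischerInner f (F i) := by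
  simp only [fischerInner, coeff_sum, Finset.mul_sum]
  exact Finset.sum_comm

lemma fischerInner_sum_left {ι : Type*} (s : Finset ι) (F : ι → MvPolynomial σ ℝ)
    (g : MvPolynomial σ ℝ) :
    fischerInner (∑ i ∈ s, F i) g = ∑ i ∈ s, fischerInner (F i) g := by
  simp only [fischerInner_comm _ g, fischerInner_sum_right]

lemma fischerInner_natCast_mul_right (f : MvPolynomial σ ℝ) (n : ℕ) (g : MvPolynomial σ ℝ) :
    fischerInner f (n * g) = n * fischerInner f g := by
  simp only [fischerInner, Finset.mul_sum, ← map_natCast C, coeff_C_mul]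
  exact Finset.sum_congr rfl fun _ _ => by ring

lemma fischerInner_self_nonneg (f : MvPolynomial σ ℝ) : 0 ≤ fischerInner f f :=
  Finset.sum_nonneg fun m _ => by
    rw [mul_assoc]; exact mul_nonneg (Nat.cast_nonneg _) (mul_self_nonneg _)

lemma coeffNormSq_le_fischerInner_self (f : MvPolynomial σ ℝ) :
    coeffNormSq f ≤ fischerInner f f :=
  Finset.sum_le_sum fun m _ => by
    rw [mul_assoc, ← sq]
    exact le_mul_of_one_le_left (sq_nonneg _) (by exact_mod_cast factorialWeight_pos m)

lemma fischerInner_self_le {f : MvPolynomial σ ℝ} {D : ℕ} (hf : f.totalDegree ≤ D) :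
    fischerInner f f ≤ D.factorial * coeffNormSq f := by
  rw [coeffNormSq, Finset.mul_sum]
  refine Finset.sum_le_sum fun m hm => ?_
  rw [mul_assoc, ← sq]
  exact mul_le_mul_of_nonneg_right
    (by exact_mod_cast factorialWeight_le_factorial ((le_totalDegree hm).trans hf)) (sq_nonneg _)

lemma fischerInner_X_mul_left (i : σ) (f g : MvPolynomial σ ℝ) :
    fischerInner (X i * f) g = fischerInner f (pderiv i g) := by
  rw [mul_comm, fischerInner, support_mul_X, Finset.sum_map, fischerInner]
  refine Finset.sum_congr rfl fun m _ => ?_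
  rw [addRightEmbedding_apply, coeff_pderiv, factorialWeight_add_single, coeff_mul_X]
  push_cast
  ring

lemma fischerInner_sumX_mul_left (A : Finset σ) (f g : MvPolynomial σ ℝ) :
    fischerInner (sumX A * f) g = fischerInner f (∑ i ∈ A, pderiv i g) := by
  simp only [sumX, Finset.sum_mul, fischerInner_sum_left, fischerInner_sum_right,
    fischerInner_X_mul_left]

lemma card_mul_fischerInner_self_le (A : Finset σ) (f : MvPolynomial σ ℝ) :
    A.card * fischerInner f f ≤ fischerInner (sumX A * f) (sumX A * f) := by
  set D := ∑ i ∈ A, pderiv i f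
  have hsum : ∑ i ∈ A, pderiv i (sumX A * f) = A.card * f + sumX A * D := by
    rw [Finset.mul_sum, ← nsmul_eq_mul, ← Finset.sum_const, ← Finset.sum_add_distrib]
    refine Finset.sum_congr rfl fun i hi => ?_
    rw [pderiv_mul, pderiv_sumX hi, one_mul]
  have hD : fischerInner f (sumX A * D) = fischerInner D D := by
    rw [fischerInner_comm, fischerInner_sumX_mul_left]
  rw [fischerInner_sumX_mul_left, hsum, fischerInner_add_right, fischerInner_natCast_mul_right, hD]
  linarith [fischerInner_self_nonneg D]

lemma fischerInner_self_le_sumX_pow_mul {A : Finset σ} (hA : A.Nonempty) (s : ℕ)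
    (f : MvPolynomial σ ℝ) :
    fischerInner f f ≤ fischerInner (sumX A ^ s * f) (sumX A ^ s * f) := by
  induction s with
  | zero => simp
  | succ s ih =>
    rw [pow_succ', mul_assoc]
    refine ih.trans (le_trans ?_ (card_mul_fischerInner_self_le A _))
    exact le_mul_of_one_le_left (fischerInner_self_nonneg _) (by exact_mod_cast hA.card_pos)

lemma coeffNorm_le_sqrt_factorial_mul {A : Finset σ} (hA : A.Nonempty) {s D : ℕ}
    {f : MvPolynomial σ ℝ} (hdeg : (sumX A ^ s * f).totalDegree ≤ D) :
    coeffNorm f ≤ √(D.factorial) * coeffNorm (sumX A ^ s * f) := by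
  rw [coeffNorm, coeffNorm, ← Real.sqrt_mul (by positivity)]
  exact Real.sqrt_le_sqrt <| (coeffNormSq_le_fischerInner_self f).trans <|
    (fischerInner_self_le_sumX_pow_mul hA s f).trans (fischerInner_self_le hdeg)

end

lemma Finset.erase_ssubset_erase_of_mem {α : Type*} [DecidableEq α] {A B : Finset α} {j : α}
    (hBA : B ⊂ A) (hj : j ∈ B) : B.erase j ⊂ A.erase j := by
  obtain ⟨a, haA, haB⟩ := Finset.exists_of_ssubset hBA
  refine (Finset.ssubset_iff_of_subset (Finset.erase_subset_erase j hBA.subset)).mpr ⟨a, ?_, ?_⟩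
  · exact Finset.mem_erase.mpr ⟨fun h => haB (h ▸ hj), haA⟩
  · exact fun h => haB (Finset.mem_of_mem_erase h)

lemma one_le_sqrt_factorial (D : ℕ) : 1 ≤ √D.factorial :=
  Real.one_le_sqrt.mpr (by exact_mod_cast D.factorial_pos)

lemma induction_step_const_le {K θ : ℝ} {T D s : ℕ} (c : ℝ) (hK : 1 ≤ K) (hc : 1 ≤ c)
    (hθ : 0 ≤ θ) (hT : 2 ≤ T) (hs : s + 1 ≤ D) :
    T * (K * θ + T * (c * (T ^ (s + 1) * (K * θ) + (s + 1) * θ))) ≤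
      3 * K * T ^ (D + 2) * c * θ := by
  have hT1 : (1 : ℝ) ≤ T := by exact_mod_cast (by omega : 1 ≤ T)
  have hpow : (T : ℝ) ^ (s + 1) ≤ T ^ D := pow_le_pow_right₀ hT1 hs
  have hs' : (s + 1 : ℝ) ≤ T ^ D :=
    le_trans (by exact_mod_cast (Nat.lt_pow_self (by omega : 1 < T)).le) hpow
  have hθ' : T ^ (s + 1) * (K * θ) + (s + 1) * θ ≤ 2 * T ^ D * K * θ := by
    nlinarith [mul_nonneg (sub_nonneg.mpr hpow) (mul_nonneg (by linarith : (0 : ℝ) ≤ K) hθ),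
      mul_nonneg (sub_nonneg.mpr hK) (mul_nonneg (by positivity : (0 : ℝ) ≤ T ^ D) hθ)]
  have h1 : (1 : ℝ) ≤ T ^ (D + 1) * c := one_le_mul_of_one_le_of_one_le (one_le_pow₀ hT1) hc
  calc T * (K * θ + T * (c * (T ^ (s + 1) * (K * θ) + (s + 1) * θ)))
      ≤ T * (K * θ + T * (c * (2 * T ^ D * K * θ))) := by gcongr
    _ = T * K * θ * (1 + 2 * (T ^ (D + 1) * c)) := by ring
    _ ≤ T * K * θ * (3 * (T ^ (D + 1) * c)) := by gcongr; linarith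
    _ = 3 * K * T ^ (D + 2) * c * θ := by ring

section

variable {T : ℕ}

lemma linearPart_eq_killVar_pderiv (Q : MvPolynomial (Fin T) ℝ) (j : Fin T) :
    linearPart Q j = killVar j (pderiv j Q) := by
  conv_rhs => rw [Q.as_sum]
  rw [linearPart, map_sum, map_sum, Finset.sum_filter]
  refine Finset.sum_congr rfl fun m _ => ?_
  rw [pderiv_monomial, killVar_monomial, Finsupp.tsub_apply, Finsupp.single_eq_same]
  obtain h | h | h : m j = 0 ∨ m j = 1 ∨ 2 ≤ m j := by omega
  · simp [h]
  · simp [h]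
  · rw [if_neg (by omega), if_neg (by omega)]

lemma coeff_linearPart (Q : MvPolynomial (Fin T) ℝ) (j : Fin T) (n : Fin T →₀ ℕ) :
    (linearPart Q j).coeff n = if n j = 0 then Q.coeff (n + Finsupp.single j 1) else 0 := by
  rw [linearPart_eq_killVar_pderiv, coeff_killVar, coeff_pderiv]
  split_ifs with h <;> simp [h]

lemma linearPart_C (c : ℝ) (j : Fin T) : linearPart (C c) j = 0 := by
  rw [linearPart_eq_killVar_pderiv, pderiv_C, map_zero]

lemma linearPart_sub (P Q : MvPolynomial (Fin T) ℝ) (j : Fin T) :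
    linearPart (P - Q) j = linearPart P j - linearPart Q j := by
  simp only [linearPart_eq_killVar_pderiv, map_sub]

lemma linearPart_nsmul (n : ℕ) (P : MvPolynomial (Fin T) ℝ) (j : Fin T) :
    linearPart (n • P) j = n • linearPart P j := by
  simp only [linearPart_eq_killVar_pderiv, map_nsmul]

lemma linearPart_mul (P Q : MvPolynomial (Fin T) ℝ) (j : Fin T) :
    linearPart (P * Q) j = killVar j P * linearPart Q j + linearPart P j * killVar j Q := by
  simp only [linearPart_eq_killVar_pderiv, pderiv_mul, map_add, map_mul]
  ring

lemma killVar_linearPart_of_ne {j k : Fin T} (h : k ≠ j) (Q : MvPolynomial (Fin T) ℝ) :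
    killVar j (linearPart Q k) = linearPart (killVar j Q) k := by
  rw [linearPart_eq_killVar_pderiv, linearPart_eq_killVar_pderiv, pderiv_killVar_of_ne h,
    killVar_comm]

lemma coeffNorm_linearPart_le (Q : MvPolynomial (Fin T) ℝ) (j : Fin T) :
    coeffNorm (linearPart Q j) ≤ coeffNorm Q := by
  refine coeffNorm_le_of_injOn (· + Finsupp.single j 1)
    (fun m _ n _ => add_right_cancel) fun m hm => ?_
  rw [coeff_linearPart, if_pos]
  by_contra h
  simp [mem_support_iff, coeff_linearPart, h] at hm

lemma totalDegree_linearPart_le {Q : MvPolynomial (Fin T) ℝ} {e : ℕ}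
    (hQ : Q.totalDegree ≤ e + 1) (j : Fin T) : (linearPart Q j).totalDegree ≤ e := by
  refine Finset.sup_le fun m hm => ?_
  rw [mem_support_iff, coeff_linearPart] at hm
  split_ifs at hm with h
  · have := le_totalDegree (mem_support_iff.mpr hm)
    rw [Finsupp.sum_add_index' (fun _ => rfl) (fun _ _ _ => rfl),
      Finsupp.sum_single_index rfl] at this
    omega
  · exact absurd rfl hm

lemma linearPart_sumX_pow_mul {A : Finset (Fin T)} {j : Fin T} (hj : j ∈ A) (s : ℕ)
    (G : MvPolynomial (Fin T) ℝ) :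
    linearPart (sumX A ^ (s + 1) * G) j =
      sumX (A.erase j) ^ s * ((s + 1) • killVar j G + sumX (A.erase j) * linearPart G j) := by
  rw [linearPart_mul, linearPart_eq_killVar_pderiv (sumX A ^ (s + 1)), pderiv_pow, pderiv_sumX hj,
    Nat.add_sub_cancel, nsmul_eq_mul]
  simp only [map_mul, map_pow, map_natCast, mul_one, killVar_sumX hj]
  push_cast
  ring

lemma coeffNorm_nsmul_killVar_add_sumX_mul_le {A B : Finset (Fin T)} (hBA : B ⊂ A) {j : Fin T}
    (hj : j ∈ B) {s D : ℕ} {G : MvPolynomial (Fin T) ℝ} {θ : ℝ} (hdeg : s + G.totalDegree ≤ D)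
    (hθ : coeffNorm (linearPart (sumX A ^ (s + 1) * G) j) ≤ θ) :
    coeffNorm ((s + 1) • killVar j G + sumX (A.erase j) * linearPart G j) ≤
      √D.factorial * θ := by
  obtain ⟨a, ha, -⟩ := Finset.exists_of_ssubset (Finset.erase_ssubset_erase_of_mem hBA hj)
  have hjA := hBA.subset hj
  refine le_trans ?_ (mul_le_mul_of_nonneg_left hθ (Real.sqrt_nonneg _))
  rw [linearPart_sumX_pow_mul hjA]
  refine coeffNorm_le_sqrt_factorial_mul ⟨a, ha⟩ ?_
  rw [← linearPart_sumX_pow_mul hjA]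
  exact totalDegree_linearPart_le ((totalDegree_sumX_pow_mul_le _ _ _).trans (by omega)) j

lemma coeffNorm_linearPart_sumX_pow_mul_linearPart_le {A : Finset (Fin T)} {j k : Fin T}
    (hj : j ∈ A) (hkj : k ≠ j) (s : ℕ) (G : MvPolynomial (Fin T) ℝ) :
    coeffNorm (linearPart (sumX (A.erase j) ^ (s + 2) * linearPart G j) k) ≤
      A.card ^ (s + 1) *
          coeffNorm ((s + 1) • killVar j G + sumX (A.erase j) * linearPart G j) +
        (s + 1) * coeffNorm (linearPart (sumX A ^ (s + 1) * G) k) := by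
  set R := (s + 1) • killVar j G + sumX (A.erase j) * linearPart G j
  have hsplit : sumX (A.erase j) ^ (s + 2) * linearPart G j =
      sumX (A.erase j) ^ (s + 1) * R - (s + 1) • killVar j (sumX A ^ (s + 1) * G) := by
    rw [map_mul, map_pow, killVar_sumX hj, nsmul_eq_mul]
    simp only [R, nsmul_eq_mul]
    ring
  rw [hsplit, linearPart_sub, linearPart_nsmul, ← killVar_linearPart_of_ne hkj]
  refine (coeffNorm_sub_le _ _).trans (add_le_add ?_ ?_)
  · calc _ ≤ coeffNorm (sumX (A.erase j) ^ (s + 1) * R) := coeffNorm_linearPart_le _ _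
      _ ≤ (A.erase j).card ^ (s + 1) * coeffNorm R := coeffNorm_sumX_pow_mul_le _ _ _
      _ ≤ _ := by
        gcongr
        · exact coeffNorm_nonneg R
        · exact Finset.erase_subset j A
  · rw [coeffNorm_nsmul]
    push_cast
    gcongr
    exact coeffNorm_killVar_le _ _

lemma coeffNorm_killVar_le_of_linearPart_le {A B : Finset (Fin T)} (hBA : B ⊂ A) {j : Fin T}
    (hj : j ∈ B) {s D : ℕ} {G : MvPolynomial (Fin T) ℝ} {θ β : ℝ}
    (hdeg : s + G.totalDegree ≤ D)
    (hθ : coeffNorm (linearPart (sumX A ^ (s + 1) * G) j) ≤ θ)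
    (hβ : coeffNorm (linearPart G j) ≤ β) :
    coeffNorm (killVar j G) ≤ √D.factorial * θ + T * β := by
  have hA : ((A.erase j).card : ℝ) ≤ T := by
    exact_mod_cast (Finset.card_le_univ _).trans_eq (Fintype.card_fin T)
  calc coeffNorm (killVar j G) ≤ (s + 1) * coeffNorm (killVar j G) :=
        le_mul_of_one_le_left (coeffNorm_nonneg _) (by simp)
    _ = coeffNorm (((s + 1) • killVar j G + sumX (A.erase j) * linearPart G j) -
          sumX (A.erase j) * linearPart G j) := by
        rw [add_sub_cancel_right, coeffNorm_nsmul]; push_cast; ring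
    _ ≤ √D.factorial * θ + (A.erase j).card * coeffNorm (linearPart G j) :=
        (coeffNorm_sub_le _ _).trans <| add_le_add
          (coeffNorm_nsmul_killVar_add_sumX_mul_le hBA hj hdeg hθ) (coeffNorm_sumX_mul_le _ _)
    _ ≤ √D.factorial * θ + T * β := by
        gcongr
        exact coeffNorm_nonneg _

lemma coeffNorm_C_le_of_linearPart_le {A B : Finset (Fin T)} (hBA : B ⊂ A) {j : Fin T}
    (hj : j ∈ B) {s D : ℕ} (hsD : s ≤ D) {c θ : ℝ}
    (hθ : coeffNorm (linearPart (sumX A ^ (s + 1) * C c) j) ≤ θ) :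
    coeffNorm (C c : MvPolynomial (Fin T) ℝ) ≤ √D.factorial * θ := by
  have hR := coeffNorm_nsmul_killVar_add_sumX_mul_le hBA hj (by simpa using hsD) hθ
  rw [killVar_C, linearPart_C, mul_zero, add_zero, coeffNorm_nsmul] at hR
  exact (le_mul_of_one_le_left (coeffNorm_nonneg _) (by simp)).trans hR

theorem coeffNorm_le_of_forall_linearPart_le {D e s : ℕ} {A B : Finset (Fin T)}
    {G : MvPolynomial (Fin T) ℝ} {θ : ℝ} (hBA : B ⊂ A) (hB : e < B.card) (hsD : s + e ≤ D)
    (hG : G.totalDegree ≤ e)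
    (hθ : ∀ j ∈ B, coeffNorm (linearPart (sumX A ^ (s + 1) * G) j) ≤ θ) :
    coeffNorm G ≤ √D.factorial * (3 * √D.factorial * T ^ (D + 2)) ^ e * θ := by
  induction e generalizing s A B G θ with
  | zero =>
    obtain ⟨j, hj⟩ := Finset.card_pos.mp hB
    obtain ⟨c, rfl⟩ : ∃ c, G = C c :=
      ⟨_, totalDegree_eq_zero_iff_eq_C.mp (Nat.le_zero.mp hG)⟩
    simpa using coeffNorm_C_le_of_linearPart_le hBA hj (by simpa using hsD) (hθ j hj)
  | succ e ih =>
    obtain ⟨j₀, hj₀⟩ := Finset.card_pos.mp (by omega : 0 < B.card)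
    have hθ0 : 0 ≤ θ := (coeffNorm_nonneg _).trans (hθ j₀ hj₀)
    have hAT : A.card ≤ T := (Finset.card_le_univ A).trans_eq (Fintype.card_fin T)
    have hBA' := Finset.card_lt_card hBA
    set K := √D.factorial
    set c := K * (3 * K * T ^ (D + 2)) ^ e
    have hK := one_le_sqrt_factorial D
    have hlin : ∀ j ∈ B,
        coeffNorm (linearPart G j) ≤ c * (T ^ (s + 1) * (K * θ) + (s + 1) * θ) := by
      intro j hj
      refine ih (s := s + 1) (Finset.erase_ssubset_erase_of_mem hBA hj)
        (by rw [Finset.card_erase_of_mem hj]; omega) (by omega) (totalDegree_linearPart_le hG j)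
        fun k hk => (coeffNorm_linearPart_sumX_pow_mul_linearPart_le (hBA.subset hj)
          (Finset.ne_of_mem_erase hk) s G).trans (add_le_add ?_ ?_)
      · exact mul_le_mul (pow_le_pow_left₀ (Nat.cast_nonneg _) (by exact_mod_cast hAT) _)
          (coeffNorm_nsmul_killVar_add_sumX_mul_le hBA hj (by omega) (hθ j hj))
          (coeffNorm_nonneg _) (by positivity)
      · exact mul_le_mul_of_nonneg_left (hθ k (Finset.mem_of_mem_erase hk)) (by positivity)
    have hx : 1 ≤ 3 * K * (T : ℝ) ^ (D + 2) := by
      have : (1 : ℝ) ≤ T ^ (D + 2) := one_le_pow₀ (by exact_mod_cast (by omega : 1 ≤ T))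
      nlinarith
    calc coeffNorm G
        ≤ B.card * (K * θ + T * (c * (T ^ (s + 1) * (K * θ) + (s + 1) * θ))) :=
          coeffNorm_le_card_mul_of_forall_killVar_le (by omega) fun j hj =>
            coeffNorm_killVar_le_of_linearPart_le hBA hj (by omega) (hθ j hj) (hlin j hj)
      _ ≤ T * (K * θ + T * (c * (T ^ (s + 1) * (K * θ) + (s + 1) * θ))) := by
          gcongr
          exact_mod_cast (by omega : B.card ≤ T)
      _ ≤ 3 * K * T ^ (D + 2) * c * θ :=
          induction_step_const_le c hK (one_le_mul_of_one_le_of_one_le hK (one_le_pow₀ hx)) hθ0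
            (by omega) (by omega)
      _ = K * (3 * K * T ^ (D + 2)) ^ (e + 1) * θ := by ring

end

lemma mul_add_two_le_three_pow : ∀ d : ℕ, d * (d + 2) ≤ 3 ^ d
  | 0 => by norm_num
  | 1 => by norm_num
  | d + 2 => by
    have := mul_add_two_le_three_pow (d + 1)
    rw [pow_succ]
    nlinarith

lemma three_pow_mul_factorial_pow_lt {d T : ℕ} (hd : 1 ≤ d) (hT : 1 ≤ T) :
    3 ^ d * d.factorial ^ (d + 1) * T ^ (d * (d + 2)) < (20 * d * T) ^ 3 ^ d := by
  have h3 := mul_add_two_le_three_pow d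
  have hfact : d.factorial ^ (d + 1) ≤ d ^ 3 ^ d := calc
    d.factorial ^ (d + 1) ≤ (d ^ d) ^ (d + 1) := Nat.pow_le_pow_left (Nat.factorial_le_pow d) _
    _ = d ^ (d * (d + 1)) := (pow_mul _ _ _).symm
    _ ≤ d ^ 3 ^ d := Nat.pow_le_pow_right hd (by nlinarith)
  have hTpow : T ^ (d * (d + 2)) ≤ T ^ 3 ^ d := Nat.pow_le_pow_right hT h3
  have h20 : 3 ^ d < 20 ^ 3 ^ d := calc
    3 ^ d < 20 ^ d := Nat.pow_lt_pow_left (by norm_num) (by omega)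
    _ ≤ 20 ^ 3 ^ d := Nat.pow_le_pow_right (by norm_num) (Nat.lt_pow_self (by norm_num)).le
  rw [mul_pow, mul_pow, mul_assoc, mul_assoc]
  exact Nat.mul_lt_mul_of_lt_of_le h20 (Nat.mul_le_mul hfact hTpow) (by positivity)

lemma sqrt_factorial_mul_pow_lt {d T : ℕ} (hd : 1 ≤ d) (hT : 1 ≤ T) :
    √d.factorial * (3 * √d.factorial * T ^ (d + 2)) ^ d < (20 * d * T : ℝ) ^ 3 ^ d := by
  have hK : √d.factorial ≤ d.factorial :=
    Real.sqrt_le_self_iff.mpr (Or.inr (by exact_mod_cast d.factorial_pos))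
  calc √d.factorial * (3 * √d.factorial * T ^ (d + 2)) ^ d
      = 3 ^ d * √d.factorial ^ (d + 1) * T ^ (d * (d + 2)) := by ring
    _ ≤ 3 ^ d * (d.factorial : ℝ) ^ (d + 1) * T ^ (d * (d + 2)) := by gcongr
    _ < (20 * d * T : ℝ) ^ 3 ^ d := by exact_mod_cast three_pow_mul_factorial_pow_lt hd hT

lemma card_filter_linearPart_lt_le {d T : ℕ} (hd : 0 < d) (hdT : d + 1 < T)
    {S : MvPolynomial (Fin T) ℝ} (hS : S.totalDegree ≤ d) :
    (Finset.univ.filter fun j => coeffNorm (linearPart (sumX Finset.univ * S) j) <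
      ((20 * d * T : ℝ) ^ 3 ^ d)⁻¹ * coeffNorm S).card ≤ d := by
  set ε := ((20 * d * T : ℝ) ^ 3 ^ d)⁻¹
  refine not_lt.mp fun h => ?_
  obtain ⟨B, hB, hBcard⟩ := Finset.exists_subset_card_eq (Nat.succ_le_of_lt h)
  have hlt : ∀ j ∈ B, coeffNorm (linearPart (sumX Finset.univ * S) j) < ε * coeffNorm S :=
    fun j hj => (Finset.mem_filter.mp (hB hj)).2
  obtain ⟨j, hj⟩ := Finset.card_pos.mp (by omega : 0 < B.card)
  have hSpos : 0 < coeffNorm S :=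
    pos_of_mul_pos_right ((coeffNorm_nonneg _).trans_lt (hlt j hj)) (by positivity)
  have hBuniv : B ⊂ Finset.univ := Finset.ssubset_univ_iff.mpr fun hB_eq => by
    rw [hB_eq, Finset.card_univ, Fintype.card_fin] at hBcard; omega
  have hS_le := coeffNorm_le_of_forall_linearPart_le (D := d) (s := 0) hBuniv (by omega)
    (by omega) hS fun j hj => by simpa using (hlt j hj).le
  have hpos : 0 < (20 * d * T : ℝ) ^ 3 ^ d := by
    have : 0 < 20 * d * T := Nat.mul_pos (Nat.mul_pos (by norm_num) hd) (by omega)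
    exact_mod_cast pow_pos this _
  have hcε : √d.factorial * (3 * √d.factorial * T ^ (d + 2)) ^ d * ε < 1 :=
    (mul_inv_lt_iff₀ hpos).mpr (by simpa using sqrt_factorial_mul_pow_lt hd (by omega : 1 ≤ T))
  rw [← mul_assoc] at hS_le
  exact lt_irrefl _ (hS_le.trans_lt (mul_lt_of_lt_one_left hSpos hcε))

theorem stmt0_general (T d : ℕ) (hd : 0 < d) (hTd : 2 * d < T)
    (S : MvPolynomial (Fin T) ℝ) (hS : S.totalDegree ≤ d)
    (Q : MvPolynomial (Fin T) ℝ) (hQ : Q = (∑ i : Fin T, X i) * S) :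
    (T : ℝ) / 2 ≤
      ((Finset.univ.filter (fun j : Fin T =>
        ((20 * d * T : ℝ) ^ (3 ^ d))⁻¹ * coeffNorm S ≤ coeffNorm (linearPart Q j))).card : ℝ) := by
  have hbad := card_filter_linearPart_lt_le hd (by omega) hS
  rw [sumX, ← hQ] at hbad
  have hcard := Finset.card_filter_add_card_filter_not (s := Finset.univ)
    (p := fun j => ((20 * (d : ℝ) * T) ^ 3 ^ d)⁻¹ * coeffNorm S ≤ coeffNorm (linearPart Q j))
  simp only [not_le, Finset.card_univ, Fintype.card_fin] at hcard
  refine le_trans ?_ (Nat.cast_le.mpr (show T - d ≤ _ by omega))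
  have : (2 * d : ℝ) < T := by exact_mod_cast hTd
  rw [Nat.cast_sub (by omega)]
  linarith

theorem stmt0 (T d : ℕ) (hT : 0 < T) (hd : 0 < d) (hTd : 2 * d < T)
    (S : MvPolynomial (Fin T) ℝ) (hS : S.totalDegree ≤ d)
    (Q : MvPolynomial (Fin T) ℝ) (hQ : Q = (∑ i : Fin T, X i) * S) :
    (T : ℝ) / 2 ≤
      ((Finset.univ.filter (fun j : Fin T =>
        ((20 * d * T : ℝ) ^ (3 ^ d))⁻¹ * coeffNorm S ≤ coeffNorm (linearPart Q j))).card : ℝ) :=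
  stmt0_general T d hd hTd S hS Q hQ
end

section
/- Let n ≥ 1 and let A, B ⊆ {1, …, n} be disjoint sets of indices. Suppose a real polynomial P in the variables X_1, …, X_n can be written as P = q(ℓ_1, …, ℓ_m), where q is a real polynomial in m variables and each ℓ_a is a linear form ℓ_a(x) = Σ_{i=1}^n v_{a,i} x_i whose coefficient vector v_a satisfies Σ_{i∈A} v_{a,i} = Σ_{i∈B} v_{a,i}. Then for every monomial M whose support is disjoint from A ∪ B, one has Σ_{i∈A} coeff(P, M·X_i) = Σ_{i∈B} coeff(P, M·X_i). -/
/-!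
Let `D = ∑_{i ∈ A} ∂ᵢ - ∑_{i ∈ B} ∂ᵢ`. It is a derivation, and the condition on `v_a` says exactly
that `D ℓ_a = 0`; by the Leibniz rule `D` then kills every polynomial in the `ℓ_a`, so `D P = 0`.
When `M` vanishes on `A ∪ B`, the coefficient of `M` in `∂ᵢ P` (`i ∈ A ∪ B`) is the coefficient of
`M · Xᵢ` in `P`, so the coefficient of `M` in `D P` is the difference of the two folding sums.
-/

open MvPolynomial

theorem Derivation.map_aeval_eq_zero {R A M ι : Type*} [CommSemiring R] [CommSemiring A]
    [Algebra R A] [AddCommMonoid M] [Module A M] [Module R M] (D : Derivation R A M)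
    {f : ι → A} (hf : ∀ a, D (f a) = 0) (q : MvPolynomial ι R) : D (aeval f q) = 0 := by
  have hmem : aeval f q ∈ Algebra.adjoin R (Set.range f) := aeval_range (R := R) f ▸ ⟨q, rfl⟩
  exact Derivation.eqOn_adjoin (D2 := 0) (by rintro _ ⟨a, rfl⟩; exact hf a) hmem

namespace MvPolynomial

variable {σ R : Type*} [CommRing R]

theorem pderiv_sum_C_mul_X [Fintype σ] (v : σ → R) (j : σ) :
    pderiv j (∑ i, C (v i) * X i : MvPolynomial σ R) = C (v j) := by
  classical
  simp [pderiv_X, Pi.single_apply]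

noncomputable def foldingDerivation (A B : Finset σ) :
    Derivation R (MvPolynomial σ R) (MvPolynomial σ R) :=
  ∑ i ∈ A, pderiv i - ∑ i ∈ B, pderiv i

theorem foldingDerivation_apply (A B : Finset σ) (p : MvPolynomial σ R) :
    foldingDerivation A B p = ∑ i ∈ A, pderiv i p - ∑ i ∈ B, pderiv i p := by
  simp only [foldingDerivation, ← Derivation.coeFnAddMonoidHom_apply, map_sub, map_sum,
    Pi.sub_apply, Finset.sum_apply]

theorem foldingDerivation_sum_C_mul_X [Fintype σ] {A B : Finset σ} {v : σ → R}
    (hv : ∑ i ∈ A, v i = ∑ i ∈ B, v i) :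
    foldingDerivation A B (∑ i, C (v i) * X i : MvPolynomial σ R) = 0 := by
  simp only [foldingDerivation_apply, pderiv_sum_C_mul_X, ← map_sum, hv, sub_self]

theorem coeff_foldingDerivation {A B : Finset σ} {M : σ →₀ ℕ} (hA : ∀ i ∈ A, M i = 0)
    (hB : ∀ i ∈ B, M i = 0) (p : MvPolynomial σ R) :
    (foldingDerivation A B p).coeff M =
      ∑ i ∈ A, p.coeff (M + Finsupp.single i 1) - ∑ i ∈ B, p.coeff (M + Finsupp.single i 1) := by
  simp only [foldingDerivation_apply, coeff_sub, coeff_sum, coeff_pderiv]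
  congr 1 <;> refine Finset.sum_congr rfl fun i hi => ?_
  · simp [hA i hi]
  · simp [hB i hi]

end MvPolynomial

theorem stmt5_general (n : ℕ) (A B : Finset (Fin n))
    (P : MvPolynomial (Fin n) ℝ) (m : ℕ) (q : MvPolynomial (Fin m) ℝ)
    (v : Fin m → Fin n → ℝ)
    (hv : ∀ a : Fin m, ∑ i ∈ A, v a i = ∑ i ∈ B, v a i)
    (hP : P = MvPolynomial.aeval
      (fun a : Fin m => ∑ i : Fin n, MvPolynomial.C (v a i) * MvPolynomial.X i) q)
    (M : Fin n →₀ ℕ) (hMA : ∀ i ∈ M.support, i ∉ A) (hMB : ∀ i ∈ M.support, i ∉ B) :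
    ∑ i ∈ A, P.coeff (M + Finsupp.single i 1)
      = ∑ i ∈ B, P.coeff (M + Finsupp.single i 1) := by
  have hDP : foldingDerivation A B P = 0 := hP ▸
    (foldingDerivation A B).map_aeval_eq_zero (fun a => foldingDerivation_sum_C_mul_X (hv a)) q
  have hcoeff := congrArg (coeff M) hDP
  rw [coeff_foldingDerivation (fun i hi => Finsupp.notMem_support_iff.mp fun h => hMA i h hi)
    (fun i hi => Finsupp.notMem_support_iff.mp fun h => hMB i h hi), coeff_zero] at hcoeff
  exact sub_eq_zero.mp hcoeff

/-- Polynomial folding lemma: a polynomial representable over linear forms whose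
coefficient vectors have equal mass-sums on `A` and on `B` satisfies all valid
folding constraints. -/
theorem stmt5 (n : ℕ) (hn : 1 ≤ n) (A B : Finset (Fin n)) (hAB : Disjoint A B)
    (P : MvPolynomial (Fin n) ℝ) (m : ℕ) (q : MvPolynomial (Fin m) ℝ)
    (v : Fin m → Fin n → ℝ)
    (hv : ∀ a : Fin m, ∑ i ∈ A, v a i = ∑ i ∈ B, v a i)
    (hP : P = MvPolynomial.aeval
      (fun a : Fin m => ∑ i : Fin n, MvPolynomial.C (v a i) * MvPolynomial.X i) q)
    (M : Fin n →₀ ℕ) (hMA : ∀ i ∈ M.support, i ∉ A) (hMB : ∀ i ∈ M.support, i ∉ B) :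
    ∑ i ∈ A, P.coeff (M + Finsupp.single i 1)
      = ∑ i ∈ B, P.coeff (M + Finsupp.single i 1) :=
  stmt5_general n A B P m q v hv hP M hMA hMB
end

section
/- Let k ≥ 1, let c_1, …, c_k be real numbers with Σ_{i=1}^k c_i² > 0, let ε ∈ (0,1) and ν > 0, and suppose that c_i² ≤ ν²·(Σ_{j=1}^k c_j²) for every i. Let ξ_1, …, ξ_k be independent {0,1}-valued random variables on a probability space, each with probability ε of equaling 1. Then the probability that Σ_{i=1}^k ξ_i·c_i² ≤ (ε/2)·Σ_{i=1}^k c_i² is at most 2·exp(−ε²/(2ν²)). -/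
/-!
Each centred summand `c i ^ 2 * (ε - ξ i)` takes values in an interval of length `c i ^ 2`, so by
Hoeffding's lemma it is sub-Gaussian with variance proxy `c i ^ 4 / 4`. Hoeffding's inequality for
the independent sum bounds the probability of a downward deviation by `ε S / 2`, where
`S = ∑ c i ^ 2`, by `exp (-ε ^ 2 S ^ 2 / (2 ∑ c i ^ 4))`, and `∑ c i ^ 4 ≤ ν ^ 2 S ^ 2` because
every `c i ^ 2` is at most `ν ^ 2 S`.
-/

open MeasureTheory ProbabilityTheory

section Bernoulli

variable {Ω : Type*} [MeasurableSpace Ω] {μ : Measure Ω} {ξ : Ω → ℝ} {p : ℝ}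

lemma integral_eq_of_forall_eq_zero_or_eq_one (hξ : Measurable ξ)
    (h01 : ∀ ω, ξ ω = 0 ∨ ξ ω = 1) (hp : 0 ≤ p) (hprob : μ {ω | ξ ω = 1} = ENNReal.ofReal p) :
    μ[ξ] = p := by
  have hξ_eq : ξ = (ξ ⁻¹' {1}).indicator 1 := by
    funext ω
    rcases h01 ω with h | h <;> simp [h]
  rw [hξ_eq, integral_indicator_one (hξ (measurableSet_singleton 1)), measureReal_def]
  exact (congrArg ENNReal.toReal hprob).trans (ENNReal.toReal_ofReal hp)

lemma hasSubgaussianMGF_mul_sub_of_forall_eq_zero_or_eq_one [IsProbabilityMeasure μ]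
    (hξ : Measurable ξ) (h01 : ∀ ω, ξ ω = 0 ∨ ξ ω = 1) (hp : 0 ≤ p)
    (hprob : μ {ω | ξ ω = 1} = ENNReal.ofReal p) (a : ℝ) :
    HasSubgaussianMGF (fun ω ↦ a * (p - ξ ω)) (‖a‖₊ ^ 2 / 4) μ := by
  have hIcc : ∀ᵐ ω ∂μ, ξ ω ∈ Set.Icc (0 : ℝ) 1 :=
    ae_of_all _ fun ω ↦ by rcases h01 ω with h | h <;> simp [h]
  have h := (hasSubgaussianMGF_of_mem_Icc hξ.aemeasurable hIcc).neg.const_mul a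
  rw [integral_eq_of_forall_eq_zero_or_eq_one hξ h01 hp hprob] at h
  convert h using 1
  · funext ω
    simp
  · ext
    -- `const_mul` writes its parameter as an anonymous subtype element, which `simp` cannot cast
    change _ = a ^ 2 * (((‖(1 : ℝ) - 0‖₊ / 2) ^ 2 : NNReal) : ℝ)
    norm_num
    ring

end Bernoulli

lemma measureReal_sum_mul_le_le_exp {Ω ι : Type*} [MeasurableSpace Ω] {μ : Measure Ω}
    [IsProbabilityMeasure μ] [Fintype ι] {ξ : ι → Ω → ℝ} (hξ : ∀ i, Measurable (ξ i))
    (h01 : ∀ i ω, ξ i ω = 0 ∨ ξ i ω = 1) (hind : iIndepFun ξ μ) {p : ℝ} (hp : 0 ≤ p)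
    (hprob : ∀ i, μ {ω | ξ i ω = 1} = ENNReal.ofReal p) (a : ι → ℝ) {t : ℝ} (ht : 0 ≤ t) :
    μ.real {ω | ∑ i, ξ i ω * a i ≤ p * ∑ i, a i - t} ≤ Real.exp (-2 * t ^ 2 / ∑ i, a i ^ 2) := by
  have hsubG : ∀ i ∈ Finset.univ,
      HasSubgaussianMGF (fun ω ↦ a i * (p - ξ i ω)) (‖a i‖₊ ^ 2 / 4) μ := fun i _ ↦
    hasSubgaussianMGF_mul_sub_of_forall_eq_zero_or_eq_one (hξ i) (h01 i) hp (hprob i) (a i)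
  have hind' : iIndepFun (fun i ω ↦ a i * (p - ξ i ω)) μ :=
    hind.comp _ fun i ↦ (measurable_const.sub measurable_id).const_mul _
  have hset : {ω | ∑ i, ξ i ω * a i ≤ p * ∑ i, a i - t} = {ω | t ≤ ∑ i, a i * (p - ξ i ω)} := by
    have hsum : ∀ ω, ∑ i, a i * (p - ξ i ω) = p * ∑ i, a i - ∑ i, ξ i ω * a i := fun ω ↦ by
      rw [Finset.mul_sum, ← Finset.sum_sub_distrib]
      exact Finset.sum_congr rfl fun i _ ↦ by ring
    ext ω
    simp only [Set.mem_ofPred_eq, hsum]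
    constructor <;> intro h <;> linarith
  rw [hset]
  refine (HasSubgaussianMGF.measure_sum_ge_le_of_iIndepFun hind' hsubG ht).trans_eq ?_
  push_cast
  simp only [Real.norm_eq_abs, sq_abs, ← Finset.sum_div]
  congr 1
  ring

open Finset in
lemma sum_sq_le_mul_sum_of_le {ι : Type*} (s : Finset ι) {a : ι → ℝ} {M : ℝ}
    (ha : ∀ i ∈ s, 0 ≤ a i) (hM : ∀ i ∈ s, a i ≤ M) :
    ∑ i ∈ s, a i ^ 2 ≤ M * ∑ i ∈ s, a i := by
  rw [mul_sum]
  exact sum_le_sum fun i hi ↦ by rw [sq]; exact mul_le_mul_of_nonneg_right (hM i hi) (ha i hi)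

theorem stmt6_general {Ω : Type*} [MeasurableSpace Ω] (μ : Measure Ω) [IsProbabilityMeasure μ]
    (k : ℕ) (c : Fin k → ℝ) (hc : 0 < ∑ i, (c i) ^ 2)
    (ε ν : ℝ) (hε0 : 0 < ε)
    (hcb : ∀ i, (c i) ^ 2 ≤ ν ^ 2 * ∑ j, (c j) ^ 2)
    (ξ : Fin k → Ω → ℝ) (hmeas : ∀ i, Measurable (ξ i))
    (h01 : ∀ i ω, ξ i ω = 0 ∨ ξ i ω = 1)
    (hind : iIndepFun ξ μ)
    (hprob : ∀ i, μ {ω | ξ i ω = 1} = ENNReal.ofReal ε) :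
    μ {ω | ∑ i, ξ i ω * (c i) ^ 2 ≤ ε / 2 * ∑ i, (c i) ^ 2}
      ≤ ENNReal.ofReal (2 * Real.exp (-ε ^ 2 / (2 * ν ^ 2))) := by
  set S := ∑ i, c i ^ 2
  set Q := ∑ i, (c i ^ 2) ^ 2
  have hQ_le : Q ≤ ν ^ 2 * S ^ 2 := by
    have := sum_sq_le_mul_sum_of_le Finset.univ (fun i _ ↦ sq_nonneg (c i)) fun i _ ↦ hcb i
    rwa [mul_assoc, ← sq] at this
  have hQ_pos : 0 < Q := by
    have hCS := sq_sum_le_card_mul_sum_sq (s := Finset.univ) (f := fun i ↦ c i ^ 2)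
    exact pos_of_mul_pos_right ((pow_pos hc 2).trans_le hCS) (Nat.cast_nonneg _)
  have hexp : -2 * (ε / 2 * S) ^ 2 / Q ≤ -ε ^ 2 / (2 * ν ^ 2) := by
    have hν2 : 0 < ν ^ 2 := pos_of_mul_pos_left (hQ_pos.trans_le hQ_le) (sq_nonneg S)
    rw [neg_mul, neg_div, neg_div, neg_le_neg_iff,
      show ε ^ 2 / (2 * ν ^ 2) = ε ^ 2 * S ^ 2 / (2 * (ν ^ 2 * S ^ 2)) by field_simp]
    calc ε ^ 2 * S ^ 2 / (2 * (ν ^ 2 * S ^ 2)) ≤ ε ^ 2 * S ^ 2 / (2 * Q) := by gcongr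
      _ = 2 * (ε / 2 * S) ^ 2 / Q := by field_simp
  have htail := measureReal_sum_mul_le_le_exp hmeas h01 hind hε0.le hprob (fun i ↦ c i ^ 2)
    (t := ε / 2 * S) (by positivity)
  rw [show ε * S - ε / 2 * S = ε / 2 * S by ring] at htail
  rw [ENNReal.le_ofReal_iff_toReal_le (measure_ne_top _ _) (by positivity)]
  calc _ ≤ Real.exp (-ε ^ 2 / (2 * ν ^ 2)) := htail.trans (Real.exp_le_exp.mpr hexp)
    _ ≤ 2 * Real.exp (-ε ^ 2 / (2 * ν ^ 2)) := by linarith [Real.exp_pos (-ε ^ 2 / (2 * ν ^ 2))]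

theorem stmt6 {Ω : Type*} [MeasurableSpace Ω] (μ : Measure Ω) [IsProbabilityMeasure μ]
    (k : ℕ) (hk : 1 ≤ k) (c : Fin k → ℝ) (hc : 0 < ∑ i, (c i) ^ 2)
    (ε ν : ℝ) (hε0 : 0 < ε) (hε1 : ε < 1) (hν : 0 < ν)
    (hcb : ∀ i, (c i) ^ 2 ≤ ν ^ 2 * ∑ j, (c j) ^ 2)
    (ξ : Fin k → Ω → ℝ) (hmeas : ∀ i, Measurable (ξ i))
    (h01 : ∀ i ω, ξ i ω = 0 ∨ ξ i ω = 1)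
    (hind : iIndepFun ξ μ)
    (hprob : ∀ i, μ {ω | ξ i ω = 1} = ENNReal.ofReal ε) :
    μ {ω | ∑ i, ξ i ω * (c i) ^ 2 ≤ ε / 2 * ∑ i, (c i) ^ 2}
      ≤ ENNReal.ofReal (2 * Real.exp (-ε ^ 2 / (2 * ν ^ 2))) :=
  stmt6_general μ k c hc ε ν hε0 hcb ξ hmeas h01 hind hprob
end

section
/- Let d ≥ 1 be an integer, let ρ be a real number with 0 < ρ ≤ 1/2, and let a_0, a_1, …, a_d be nonnegative real numbers with a_d = 0 and A := Σ_{D=0}^{d−1} a_D > 0. Then there exists d* ∈ {0, 1, …, d−1} such that a_{d*} ≥ (1/4)·ρ^{d*}·A and a_{d*+1} ≤ (1/4)·ρ^{d*+1}·A. -/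
/-! The weights `ρ ^ D / 4` sum to at most `1 / 2` over `D < d`, so some level `D < d` carries mass
at least `ρ ^ D A / 4`, while level `d` (mass `0`) does not. The last level at which this holds is
heavy and is followed by a light one. -/

open Finset

lemma Nat.exists_lt_and_not_succ_of_le {p : ℕ → Prop} {m n : ℕ} (hmn : m ≤ n) (hm : p m)
    (hn : ¬ p n) : ∃ k < n, p k ∧ ¬ p (k + 1) := by
  induction n, hmn using Nat.le_induction with
  | base => exact absurd hm hn
  | succ n _ ih =>
    by_cases hpn : p n
    · exact ⟨n, n.lt_succ_self, hpn, hn⟩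
    · obtain ⟨k, hk, hpk, hpk'⟩ := ih hpn
      exact ⟨k, hk.trans n.lt_succ_self, hpk, hpk'⟩

lemma sum_range_pow_le_two {ρ : ℝ} (hρ0 : 0 ≤ ρ) (hρ1 : ρ ≤ 1 / 2) (n : ℕ) :
    ∑ i ∈ range n, ρ ^ i ≤ 2 :=
  (sum_le_sum fun i _ ↦ pow_le_pow_left₀ hρ0 hρ1 i).trans (sum_geometric_two_le n)

lemma Finset.exists_mul_sum_lt_of_sum_lt_one {ι : Type*} {s : Finset ι} {a c : ι → ℝ}
    (hc : ∑ i ∈ s, c i < 1) (ha : 0 < ∑ i ∈ s, a i) :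
    ∃ i ∈ s, c i * ∑ j ∈ s, a j < a i :=
  exists_lt_of_sum_lt <| by
    rw [← sum_mul]
    simpa using mul_lt_mul_of_pos_right hc ha

theorem stmt7_general (d : ℕ) (ρ : ℝ) (hρ0 : 0 < ρ) (hρ1 : ρ ≤ 1 / 2)
    (a : ℕ → ℝ) (had : a d = 0)
    (hA : 0 < ∑ D ∈ Finset.range d, a D) :
    ∃ dstar : ℕ, dstar < d ∧
      a dstar ≥ 1 / 4 * ρ ^ dstar * ∑ D ∈ Finset.range d, a D ∧
      a (dstar + 1) ≤ 1 / 4 * ρ ^ (dstar + 1) * ∑ D ∈ Finset.range d, a D := by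
  set A := ∑ D ∈ range d, a D
  have hweights : ∑ D ∈ range d, 1 / 4 * ρ ^ D < 1 :=
    calc ∑ D ∈ range d, 1 / 4 * ρ ^ D = 1 / 4 * ∑ D ∈ range d, ρ ^ D := by rw [mul_sum]
      _ ≤ 1 / 4 * 2 := by gcongr; exact sum_range_pow_le_two hρ0.le hρ1 d
      _ < 1 := by norm_num
  obtain ⟨D₀, hD₀, hheavy⟩ := exists_mul_sum_lt_of_sum_lt_one hweights hA
  have hlight : ¬ 1 / 4 * ρ ^ d * A ≤ a d := by
    rw [had, not_le]
    positivity
  obtain ⟨D, hD, hD_heavy, hD_light⟩ :=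
    Nat.exists_lt_and_not_succ_of_le (p := fun D ↦ 1 / 4 * ρ ^ D * A ≤ a D)
      (mem_range.1 hD₀).le hheavy.le hlight
  exact ⟨D, hD, hD_heavy, (not_le.1 hD_light).le⟩

theorem stmt7 (d : ℕ) (hd : 1 ≤ d) (ρ : ℝ) (hρ0 : 0 < ρ) (hρ1 : ρ ≤ 1 / 2)
    (a : ℕ → ℝ) (hnn : ∀ D, D ≤ d → 0 ≤ a D) (had : a d = 0)
    (hA : 0 < ∑ D ∈ Finset.range d, a D) :
    ∃ dstar : ℕ, dstar < d ∧
      a dstar ≥ 1 / 4 * ρ ^ dstar * ∑ D ∈ Finset.range d, a D ∧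
      a (dstar + 1) ≤ 1 / 4 * ρ ^ (dstar + 1) * ∑ D ∈ Finset.range d, a D :=
  stmt7_general d ρ hρ0 hρ1 a had hA
end
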